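/- Let B be a Garside shadow in (W,S), let g ∈ W, set b = π_B(g⁻¹), and let w ∈ B be such that π_B(wb) = w. Then w ⪯ wb ⪯ wg⁻¹ and ν_B(gw⁻¹) = g. -/
import Mathlib


open CoxeterSystem

variable {ι W : Type} [Group W] {cm : CoxeterMatrix ι}

/-- The right weak order on `W`: `g ⪯ h` iff `ℓ(g) + ℓ(g⁻¹h) = ℓ(h)`. -/
def WLe (cs : CoxeterSystem cm W) (g h : W) : Prop :=
  cs.length g + cs.length (g⁻¹ * h) = cs.length h

/-- `w` is a suffix of `g` if `g = u * w` with `ℓ(g) = ℓ(u) + ℓ(w)`. -/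
def IsSuffixOf (cs : CoxeterSystem cm W) (w g : W) : Prop :=
  ∃ u : W, g = u * w ∧ cs.length g = cs.length u + cs.length w

/-- `j` is the join (least upper bound) of `X` with respect to the right weak order. -/
def IsJoin (cs : CoxeterSystem cm W) (X : Set W) (j : W) : Prop :=
  (∀ x ∈ X, WLe cs x j) ∧ ∀ u : W, (∀ x ∈ X, WLe cs x u) → WLe cs j u

/-- A Garside shadow: a subset of `W` containing all simple reflections, closed under
existing joins and under taking suffixes. -/
def IsGarsideShadow (cs : CoxeterSystem cm W) (B : Set W) : Prop :=
  (∀ i : ι, cs.simple i ∈ B) ∧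
  (∀ X : Set W, X ⊆ B → ∀ j : W, IsJoin cs X j → j ∈ B) ∧
  (∀ b ∈ B, ∀ w : W, IsSuffixOf cs w b → w ∈ B)

/-- `π` is the `B`-projection: `π g` is the join of `{b ∈ B : b ⪯ g}` and lies in `B`. -/
def IsGarsideProjection (cs : CoxeterSystem cm W) (B : Set W) (π : W → W) : Prop :=
  ∀ g : W, π g ∈ B ∧ IsJoin cs {b : W | b ∈ B ∧ WLe cs b g} (π g)

/-- The voracious projection with respect to `π = π_B`: `ν_B(g) = g · π_B(g⁻¹)`. -/
def vor (π : W → W) (g : W) : W := g * π g⁻¹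

/-- The language `L_g`, defined inductively: `L_id = {ε}` and
`L_g = {uv : u ∈ L_{ν_B(g)}, v a minimal length word representing ν_B(g)⁻¹g}`. -/
inductive VorL (cs : CoxeterSystem cm W) (π : W → W) : W → List ι → Prop
  | nil : VorL cs π 1 []
  | step {g : W} {u v : List ι} (hg : g ≠ 1) (hu : VorL cs π (vor π g) u)
      (hv : cs.wordProd v = (vor π g)⁻¹ * g)
      (hmin : v.length = cs.length ((vor π g)⁻¹ * g)) :
      VorL cs π g (u ++ v)

/-- The voracious language `V_B = ⋃_{g ∈ W} L_g`. -/
def VorLang (cs : CoxeterSystem cm W) (π : W → W) : Language ι :=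
  {v : List ι | ∃ g : W, VorL cs π g v}

/-- The reflection `r` separates `g` from `h`. -/
def SepElem (cs : CoxeterSystem cm W) (r g h : W) : Prop :=
  Xor' (cs.length (r * g) < cs.length g) (cs.length (r * h) < cs.length h)

/-- The reflection `r'` separates `g` from the wall of the reflection `r`. -/
def SepWall (cs : CoxeterSystem cm W) (r' g r : W) : Prop :=
  ∀ h : W, (∃ i : ι, r * h = h * cs.simple i) → SepElem cs r' g h

/-- The wall of the reflection `r` is `m`-close to `g`: at most `m` reflections
separate `g` from the wall of `r`. -/
def MClose (cs : CoxeterSystem cm W) (m : ℕ) (g r : W) : Prop :=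
  ∃ F : Finset W, F.card ≤ m ∧
    ∀ r' : W, cs.IsReflection r' → SepWall cs r' g r → r' ∈ F


section Helpers

variable (cs : CoxeterSystem cm W)

lemma wle_trans {a b c : W} (h1 : WLe cs a b) (h2 : WLe cs b c) : WLe cs a c := by
  unfold WLe at *
  have t1 : cs.length (a⁻¹ * c) ≤ cs.length (a⁻¹ * b) + cs.length (b⁻¹ * c) := by
    have := cs.length_mul_le (a⁻¹ * b) (b⁻¹ * c)
    have e : (a⁻¹ * b) * (b⁻¹ * c) = a⁻¹ * c := by group
    rwa [e] at this
  have t2 : cs.length c ≤ cs.length a + cs.length (a⁻¹ * c) := by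
    have := cs.length_mul_le a (a⁻¹ * c)
    have e : a * (a⁻¹ * c) = c := by group
    rwa [e] at this
  omega

lemma wle_antisymm {a b : W} (h1 : WLe cs a b) (h2 : WLe cs b a) : a = b := by
  unfold WLe at *
  have hx : cs.length (b⁻¹ * a) = cs.length (a⁻¹ * b) := by
    rw [← cs.length_inv]; congr 1; group
  rw [hx] at h2
  have h0 : cs.length (a⁻¹ * b) = 0 := by omega
  exact inv_mul_eq_one.mp (cs.length_eq_zero_iff.mp h0)

variable {B : Set W} {piB : W → W}

lemma le_pi (hpi : IsGarsideProjection cs B piB) {c g : W} (hc : c ∈ B)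
    (hle : WLe cs c g) : WLe cs c (piB g) :=
  (hpi g).2.1 c ⟨hc, hle⟩

lemma pi_lub (hpi : IsGarsideProjection cs B piB) {g u : W}
    (h : ∀ c ∈ B, WLe cs c g → WLe cs c u) : WLe cs (piB g) u :=
  (hpi g).2.2 u (fun x hx => h x hx.1 hx.2)

lemma pi_le (hpi : IsGarsideProjection cs B piB) (g : W) : WLe cs (piB g) g :=
  pi_lub cs hpi (fun _ _ h => h)

/-- Key Lemma A : `π(s·v) = π(s·π(v))` when `ℓ(s·v) = ℓ(v)+1`. -/
lemma pi_simple_mul (hB : IsGarsideShadow cs B) (hpi : IsGarsideProjection cs B piB)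
    (i : ι) (v : W) (hv : cs.length (cs.simple i * v) = cs.length v + 1) :
    piB (cs.simple i * v) = piB (cs.simple i * piB v) := by
  have hzv : WLe cs (piB v) v := pi_le cs hpi v
  have hzv' : cs.length (piB v) + cs.length ((piB v)⁻¹ * v) = cs.length v := hzv
  -- ℓ(s·z) = ℓ(z) + 1
  have hsz : cs.length (cs.simple i * piB v) = cs.length (piB v) + 1 := by
    have t1 : cs.length (cs.simple i * v)
        ≤ cs.length (cs.simple i * piB v) + cs.length ((piB v)⁻¹ * v) := by
      have := cs.length_mul_le (cs.simple i * piB v) ((piB v)⁻¹ * v)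
      have e : (cs.simple i * piB v) * ((piB v)⁻¹ * v) = cs.simple i * v := by group
      rwa [e] at this
    have t2 : cs.length (cs.simple i * piB v) ≤ cs.length (piB v) + 1 := by
      have := cs.length_mul_le (cs.simple i) (piB v)
      rw [cs.length_simple] at this
      omega
    omega
  -- s·z ⪯ s·v
  have hszsv : WLe cs (cs.simple i * piB v) (cs.simple i * v) := by
    show cs.length (cs.simple i * piB v)
        + cs.length ((cs.simple i * piB v)⁻¹ * (cs.simple i * v)) = _
    have e : (cs.simple i * piB v)⁻¹ * (cs.simple i * v) = (piB v)⁻¹ * v := by group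
    rw [e, hsz, hv]
    omega
  have hPB : piB (cs.simple i * v) ∈ B := (hpi (cs.simple i * v)).1
  have hPle : WLe cs (piB (cs.simple i * v)) (cs.simple i * v) := pi_le cs hpi _
  -- s ⪯ P := π(s·v)
  have hsP : WLe cs (cs.simple i) (piB (cs.simple i * v)) := by
    refine le_pi cs hpi (hB.1 i) ?_
    show cs.length (cs.simple i) + cs.length ((cs.simple i)⁻¹ * (cs.simple i * v)) = _
    rw [cs.length_simple, cs.inv_simple, cs.simple_mul_simple_cancel_left, hv]
    omega
  have hsP' : 1 + cs.length (cs.simple i * piB (cs.simple i * v))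
      = cs.length (piB (cs.simple i * v)) := by
    have := hsP
    unfold WLe at this
    rwa [cs.length_simple, cs.inv_simple] at this
  -- P₁ := s·P is a suffix of P, hence in B
  have hP1B : cs.simple i * piB (cs.simple i * v) ∈ B := by
    refine hB.2.2 _ hPB _ ⟨cs.simple i, ?_, ?_⟩
    · rw [cs.simple_mul_simple_cancel_left]
    · rw [cs.length_simple]; omega
  -- P₁ ⪯ v
  have hP1v : WLe cs (cs.simple i * piB (cs.simple i * v)) v := by
    show cs.length (cs.simple i * piB (cs.simple i * v))
        + cs.length ((cs.simple i * piB (cs.simple i * v))⁻¹ * v) = cs.length v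
    have e : (cs.simple i * piB (cs.simple i * v))⁻¹ * v
        = (piB (cs.simple i * v))⁻¹ * (cs.simple i * v) := by
      rw [mul_inv_rev, cs.inv_simple, mul_assoc]
    rw [e]
    have hPle' : cs.length (piB (cs.simple i * v))
        + cs.length ((piB (cs.simple i * v))⁻¹ * (cs.simple i * v))
        = cs.length (cs.simple i * v) := hPle
    omega
  -- P₁ ⪯ z, hence P ⪯ s·z
  have hP1z : WLe cs (cs.simple i * piB (cs.simple i * v)) (piB v) :=
    le_pi cs hpi hP1B hP1v
  have hPsz : WLe cs (piB (cs.simple i * v)) (cs.simple i * piB v) := by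
    show cs.length (piB (cs.simple i * v))
        + cs.length ((piB (cs.simple i * v))⁻¹ * (cs.simple i * piB v)) = _
    have e : (piB (cs.simple i * v))⁻¹ * (cs.simple i * piB v)
        = (cs.simple i * piB (cs.simple i * v))⁻¹ * piB v := by
      rw [mul_inv_rev, cs.inv_simple, mul_assoc]
    have hP1z' : cs.length (cs.simple i * piB (cs.simple i * v))
        + cs.length ((cs.simple i * piB (cs.simple i * v))⁻¹ * piB v)
        = cs.length (piB v) := hP1z
    rw [e, hsz]
    omega
  -- conclude by antisymmetry
  refine wle_antisymm cs ?_ ?_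
  · exact le_pi cs hpi hPB hPsz
  · exact pi_lub cs hpi (fun c hc hcle => le_pi cs hpi hc (wle_trans cs hcle hszsv))

/-- Main induction: if `ℓ(w·π(h))` is additive then so is `ℓ(w·h)`, and
`π(w·h) = π(w·π(h))`. -/
lemma key (hB : IsGarsideShadow cs B) (hpi : IsGarsideProjection cs B piB) :
    ∀ n : ℕ, ∀ w h : W, cs.length w ≤ n →
    cs.length (w * piB h) = cs.length w + cs.length (piB h) →
    cs.length (w * h) = cs.length w + cs.length h ∧ piB (w * h) = piB (w * piB h) := by
  intro n
  induction n with
  | zero =>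
    intro w h hw _
    have hw1 : w = 1 := cs.length_eq_zero_iff.mp (Nat.le_zero.mp hw)
    subst hw1
    refine ⟨by simp, ?_⟩
    simp only [one_mul]
    refine wle_antisymm cs ?_ ?_
    · exact le_pi cs hpi (hpi h).1 (by unfold WLe; simp)
    · exact pi_le cs hpi (piB h)
  | succ n ih =>
    intro w h hw hadd
    by_cases hw1 : w = 1
    · subst hw1
      refine ⟨by simp, ?_⟩
      simp only [one_mul]
      refine wle_antisymm cs ?_ ?_
      · exact le_pi cs hpi (hpi h).1 (by unfold WLe; simp)
      · exact pi_le cs hpi (piB h)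
    · obtain ⟨i, hdesc⟩ := cs.exists_leftDescent_of_ne_one hw1
      have hww : w = cs.simple i * (cs.simple i * w) :=
        (cs.simple_mul_simple_cancel_left i).symm
      have hlw : cs.length w = cs.length (cs.simple i * w) + 1 := by
        have t : cs.length w ≤ 1 + cs.length (cs.simple i * w) := by
          conv_lhs => rw [hww]
          have := cs.length_mul_le (cs.simple i) (cs.simple i * w)
          rwa [cs.length_simple] at this
        have : cs.length (cs.simple i * w) < cs.length w := hdesc
        omega
      have hwn : cs.length (cs.simple i * w) ≤ n := by omega
      -- additivity of ℓ((s·w)·π h) and ℓ(s·((s·w)·π h)) = +1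
      have e1 : w * piB h = cs.simple i * (cs.simple i * w * piB h) := by
        conv_lhs => rw [hww]; rw [mul_assoc]
      have t1 : cs.length (w * piB h) ≤ 1 + cs.length (cs.simple i * w * piB h) := by
        rw [e1]
        have := cs.length_mul_le (cs.simple i) (cs.simple i * w * piB h)
        rwa [cs.length_simple] at this
      have t2 : cs.length (cs.simple i * w * piB h)
          ≤ cs.length (cs.simple i * w) + cs.length (piB h) :=
        cs.length_mul_le _ _
      have hadd1 : cs.length (cs.simple i * w * piB h)
          = cs.length (cs.simple i * w) + cs.length (piB h) := by omega
      have hstep1 : cs.length (cs.simple i * (cs.simple i * w * piB h))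
          = cs.length (cs.simple i * w * piB h) + 1 := by
        rw [← e1]; omega
      obtain ⟨ih1, ih2⟩ := ih (cs.simple i * w) h hwn hadd1
      -- ℓ(s·((s·w)·h)) = ℓ((s·w)·h) + 1
      have hstep2 : cs.length (cs.simple i * (cs.simple i * w * h))
          = cs.length (cs.simple i * w * h) + 1 := by
        rcases cs.length_simple_mul (cs.simple i * w * h) i with hc | hc
        · exact hc
        · exfalso
          have hsle : WLe cs (cs.simple i) (cs.simple i * w * h) := by
            show cs.length (cs.simple i)
                + cs.length ((cs.simple i)⁻¹ * (cs.simple i * w * h)) = _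
            rw [cs.length_simple, cs.inv_simple]
            have e : cs.simple i * (cs.simple i * w * h) = w * h := by
              conv_rhs => rw [hww, mul_assoc]
            omega
          have h2a := le_pi cs hpi (hB.1 i) hsle
          rw [ih2] at h2a
          have h2 := wle_trans cs h2a (pi_le cs hpi (cs.simple i * w * piB h))
          unfold WLe at h2
          rw [cs.length_simple, cs.inv_simple] at h2
          omega
      constructor
      · have e2 : w * h = cs.simple i * (cs.simple i * w * h) := by
          conv_lhs => rw [hww]; rw [mul_assoc]
        rw [e2, hstep2]
        omega
      · have e2 : w * h = cs.simple i * (cs.simple i * w * h) := by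
          conv_lhs => rw [hww]; rw [mul_assoc]
        calc piB (w * h) = piB (cs.simple i * (cs.simple i * w * h)) := by rw [← e2]
          _ = piB (cs.simple i * piB (cs.simple i * w * h)) := by
              exact pi_simple_mul cs hB hpi i _ hstep2
          _ = piB (cs.simple i * piB (cs.simple i * w * piB h)) := by rw [ih2]
          _ = piB (cs.simple i * (cs.simple i * w * piB h)) := by
              exact (pi_simple_mul cs hB hpi i _ hstep1).symm
          _ = piB (w * piB h) := by rw [← e1]

end Helpers

/-- Let `b = π_B(g⁻¹)` and `w ∈ B` with `π_B(wb) = w`. Then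
`w ⪯ wb ⪯ wg⁻¹` and `ν_B(gw⁻¹) = g`. -/
theorem vor_of_edge [Finite ι] (cs : CoxeterSystem cm W)
    (B : Set W) (hB : IsGarsideShadow cs B)
    (piB : W → W) (hpi : IsGarsideProjection cs B piB)
    (g w : W) (hw : w ∈ B) (hproj : piB (w * piB g⁻¹) = w) :
    WLe cs w (w * piB g⁻¹) ∧ WLe cs (w * piB g⁻¹) (w * g⁻¹) ∧
    vor piB (g * w⁻¹) = g := by
  have goal1 : WLe cs w (w * piB g⁻¹) := by
    have := pi_le cs hpi (w * piB g⁻¹)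
    rwa [hproj] at this
  have Hb : cs.length (w * piB g⁻¹) = cs.length w + cs.length (piB g⁻¹) := by
    have h' : cs.length w + cs.length (w⁻¹ * (w * piB g⁻¹))
        = cs.length (w * piB g⁻¹) := goal1
    have e : w⁻¹ * (w * piB g⁻¹) = piB g⁻¹ := by group
    rw [e] at h'
    omega
  obtain ⟨hlen, hpieq⟩ := key cs hB hpi (cs.length w) w g⁻¹ le_rfl Hb
  refine ⟨goal1, ?_, ?_⟩
  · show cs.length (w * piB g⁻¹)
        + cs.length ((w * piB g⁻¹)⁻¹ * (w * g⁻¹)) = cs.length (w * g⁻¹)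
    have e : (w * piB g⁻¹)⁻¹ * (w * g⁻¹) = (piB g⁻¹)⁻¹ * g⁻¹ := by group
    have hbg : cs.length (piB g⁻¹) + cs.length ((piB g⁻¹)⁻¹ * g⁻¹)
        = cs.length g⁻¹ := pi_le cs hpi g⁻¹
    rw [e, Hb, hlen]
    omega
  · show (g * w⁻¹) * piB ((g * w⁻¹)⁻¹) = g
    have e : (g * w⁻¹)⁻¹ = w * g⁻¹ := by group
    rw [e, hpieq, hproj]
    group
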